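/- arXiv:1608.01192 — 2 statements merged into one kernel-verified Lean document; each statement's English description precedes it below -/
import Mathlib

section
/- If A is a self-adjoint trace-class operator on a Hilbert space such that A + P ≥ 0 for some rank-one orthogonal projection P (equivalently, A has at most one negative eigenvalue), then tr|A| ≤ 2‖A‖_HS + tr(A), where ‖A‖_HS denotes the Hilbert–Schmidt norm. -/
/-! The gap `tr|A| - tr A = ∑ (|λ| - λ)` only sees negative eigenvalues; with at most one of
them, `λ_m`, it is at most `2|λ_m|`, and a single eigenvalue is bounded by the Hilbert–Schmidt
norm. -/

section

variable {ι : Type*}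

theorem Summable.sq_of_abs {f : ι → ℝ} (hf : Summable fun i => |f i|) :
    Summable fun i => f i ^ 2 := by
  refine hf.of_norm_bounded_eventually ?_
  filter_upwards [hf.tendsto_cofinite_zero.eventually_le_const zero_lt_one] with i hi
  rw [Real.norm_eq_abs, abs_pow, sq]
  exact mul_le_of_le_one_left (abs_nonneg _) hi

theorem abs_le_sqrt_tsum_sq {f : ι → ℝ} (hf : Summable fun i => f i ^ 2) (i : ι) :
    |f i| ≤ √(∑' j, f j ^ 2) :=
  Real.abs_le_sqrt (hf.le_tsum i fun j _ => sq_nonneg (f j))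

theorem tsum_abs_sub_tsum_eq_of_forall_ne_nonneg {f : ι → ℝ}
    (hf : Summable fun i => |f i|) {m : ι} (h : ∀ i ≠ m, 0 ≤ f i) :
    ∑' i, |f i| - ∑' i, f i = |f m| - f m := by
  rw [← hf.tsum_sub hf.of_abs]
  exact tsum_eq_single m fun i hi => sub_eq_zero.2 (abs_of_nonneg (h i hi))

theorem exists_forall_ne_nonneg_of_subsingleton_neg [Nonempty ι] {f : ι → ℝ}
    (h : ∀ m n, f m < 0 → f n < 0 → m = n) : ∃ m, ∀ n ≠ m, 0 ≤ f n := by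
  by_cases hneg : ∃ m, f m < 0
  · obtain ⟨m, hm⟩ := hneg
    exact ⟨m, fun n hn => not_lt.1 fun hn' => hn (h n m hn' hm)⟩
  · push Not at hneg
    exact ⟨Classical.arbitrary ι, fun n _ => hneg n⟩

end

/-- If `A` is a self-adjoint trace-class operator on a separable Hilbert
space with at most one negative eigenvalue (equivalently `A + P ≥ 0` for some rank-one
orthogonal projection `P`), then `tr|A| ≤ 2‖A‖_HS + tr(A)`.

By the spectral theorem such an operator is determined by its sequence of real
eigenvalues `Λ : ℕ → ℝ` counted with multiplicity (padded by zeros); the trace norm is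
`∑ |Λ n|`, the Hilbert–Schmidt norm is `√(∑ (Λ n)²)` and the trace is `∑ Λ n`. -/
theorem stmt_0 (Λ : ℕ → ℝ) (h_trace_class : Summable (fun n => |Λ n|))
    (h_one_neg : ∀ m n, Λ m < 0 → Λ n < 0 → m = n) :
    ∑' n, |Λ n| ≤ 2 * Real.sqrt (∑' n, (Λ n) ^ 2) + ∑' n, Λ n := by
  obtain ⟨m, hm⟩ := exists_forall_ne_nonneg_of_subsingleton_neg h_one_neg
  have h_gap := tsum_abs_sub_tsum_eq_of_forall_ne_nonneg h_trace_class hm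
  have h_neg_le_hs := abs_le_sqrt_tsum_sq h_trace_class.sq_of_abs m
  linarith [neg_abs_le (Λ m)]
end

section
/- Let φ, Ψ ∈ H^s(ℝ^d) with ‖φ‖_{L²}=‖Ψ‖_{L²}=1, set p = |φ⟩⟨φ|, q = 1-p, S = (1-Δ)^s, and a = ‖qΨ‖². Then for any θ ∈ [0,1), ⟨Ψ, S^θ Ψ⟩ - ⟨φ, S^θ φ⟩ ≤ (‖S^{1/2}Ψ‖ + ‖S^{1/2}φ‖) · max(1, (‖S^{1/2}Ψ‖+‖S^{1/2}φ‖)^{2θ-1}) · a^{min(1/2, 1-θ)}. -/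
/-!
With the weight `w = (1 + |ξ|²)^s ≥ 1`, write `Q = F - c G` where `c = ∫ conj G · F`, so that
`‖c‖ ≤ 1` by Cauchy–Schwarz. Since `‖F‖² - ‖c‖²‖G‖² ≤ ‖Q‖ (‖F‖ + ‖G‖)` pointwise, the difference
of the `w^θ`-energies is at most `∫ w^θ ‖Q‖ (‖F‖ + ‖G‖)`. Splitting `w^θ = w^{1/2} w^{θ-1/2}`,
Cauchy–Schwarz and Minkowski bound this by `M ‖w^{θ-1/2} Q‖₂`. For `θ ≤ 1/2` the weight
`w^{2θ-1}` is at most `1`, which gives `a^{1/2}`; for `θ > 1/2`, Hölder interpolates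
`∫ w^{2θ-1} ‖Q‖²` between `∫ w ‖Q‖² ≤ M²` and `∫ ‖Q‖² = a`.
-/

open MeasureTheory

section

variable {α : Type*} [MeasurableSpace α] {μ : Measure α}

lemma MeasureTheory.MemLp.toReal_eLpNorm_two {E : Type*} [NormedAddCommGroup E] {f : α → E}
    (hf : MemLp f 2 μ) : (eLpNorm f 2 μ).toReal = √(∫ x, ‖f x‖ ^ 2 ∂μ) := by
  rw [hf.eLpNorm_eq_integral_rpow_norm two_ne_zero ENNReal.ofNat_ne_top,
    ENNReal.toReal_ofReal (by positivity), Real.sqrt_eq_rpow]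
  norm_num [Real.rpow_two]

lemma integral_norm_mul_norm_le_sqrt_mul_sqrt {E : Type*} [NormedAddCommGroup E]
    {f g : α → E} (hf : MemLp f 2 μ) (hg : MemLp g 2 μ) :
    ∫ x, ‖f x‖ * ‖g x‖ ∂μ ≤ √(∫ x, ‖f x‖ ^ 2 ∂μ) * √(∫ x, ‖g x‖ ^ 2 ∂μ) := by
  have h := integral_mul_norm_le_Lp_mul_Lq (μ := μ) (f := f) (g := g) Real.HolderConjugate.two_two
    (by rwa [ENNReal.ofReal_ofNat]) (by rwa [ENNReal.ofReal_ofNat])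
  simpa only [Real.rpow_two, Real.sqrt_eq_rpow] using h

lemma integral_mul_le_sqrt_mul_sqrt {f g : α → ℝ} (hf : MemLp f 2 μ) (hg : MemLp g 2 μ) :
    ∫ x, f x * g x ∂μ ≤ √(∫ x, f x ^ 2 ∂μ) * √(∫ x, g x ^ 2 ∂μ) := by
  calc ∫ x, f x * g x ∂μ ≤ ∫ x, ‖f x‖ * ‖g x‖ ∂μ :=
        integral_mono (hf.integrable_mul hg) (hf.norm.integrable_mul hg.norm)
          fun x => by simpa only [Real.norm_eq_abs, abs_mul] using le_abs_self (f x * g x)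
    _ ≤ _ := by
        simpa only [Real.norm_eq_abs, sq_abs] using integral_norm_mul_norm_le_sqrt_mul_sqrt hf hg

lemma sqrt_integral_add_sq_le {f g : α → ℝ} (hf : MemLp f 2 μ) (hg : MemLp g 2 μ) :
    √(∫ x, (f x + g x) ^ 2 ∂μ) ≤ √(∫ x, f x ^ 2 ∂μ) + √(∫ x, g x ^ 2 ∂μ) := by
  have h := ENNReal.toReal_mono (ENNReal.add_ne_top.2 ⟨hf.2.ne, hg.2.ne⟩)
    (eLpNorm_add_le hf.1 hg.1 one_le_two)
  rw [ENNReal.toReal_add hf.2.ne hg.2.ne, (hf.add hg).toReal_eLpNorm_two,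
    hf.toReal_eLpNorm_two, hg.toReal_eLpNorm_two] at h
  simpa only [Pi.add_apply, Real.norm_eq_abs, sq_abs] using h

lemma norm_integral_conj_mul_le {𝕜 : Type*} [RCLike 𝕜] {f g : α → 𝕜} (hf : MemLp f 2 μ)
    (hg : MemLp g 2 μ) :
    ‖∫ x, starRingEnd 𝕜 (f x) * g x ∂μ‖ ≤ √(∫ x, ‖f x‖ ^ 2 ∂μ) * √(∫ x, ‖g x‖ ^ 2 ∂μ) :=
  (norm_integral_le_integral_norm _).trans <| by
    simpa only [norm_mul, RCLike.norm_conj] using integral_norm_mul_norm_le_sqrt_mul_sqrt hf hg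

lemma integral_rpow_mul_le_rpow_mul_rpow {w u : α → ℝ} (hw : ∀ x, 0 ≤ w x) (hu : ∀ x, 0 ≤ u x)
    (hu_int : Integrable u μ) (hwu_int : Integrable (fun x => w x * u x) μ) {t : ℝ}
    (hwtu_int : Integrable (fun x => w x ^ t * u x) μ) (ht0 : 0 ≤ t) (ht1 : t ≤ 1) :
    ∫ x, w x ^ t * u x ∂μ ≤ (∫ x, w x * u x ∂μ) ^ t * (∫ x, u x ∂μ) ^ (1 - t) := by
  have hsplit : ∀ x, ENNReal.ofReal (w x ^ t * u x)
      = ENNReal.ofReal (w x * u x) ^ t * ENNReal.ofReal (u x) ^ (1 - t) := fun x => by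
    rw [ENNReal.ofReal_rpow_of_nonneg (mul_nonneg (hw x) (hu x)) ht0,
      ENNReal.ofReal_rpow_of_nonneg (hu x) (sub_nonneg.2 ht1),
      ← ENNReal.ofReal_mul (Real.rpow_nonneg (mul_nonneg (hw x) (hu x)) _),
      Real.mul_rpow (hw x) (hu x), mul_assoc, ← Real.rpow_add' (hu x) (by norm_num)]
    norm_num
  have hwu0 : 0 ≤ ∫ x, w x * u x ∂μ := integral_nonneg fun x => mul_nonneg (hw x) (hu x)
  have hu0 : 0 ≤ ∫ x, u x ∂μ := integral_nonneg hu
  rw [← ENNReal.ofReal_le_ofReal_iff (by positivity),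
    ofReal_integral_eq_lintegral_ofReal hwtu_int (.of_forall fun x => by
      have := hw x; have := hu x; positivity),
    ENNReal.ofReal_mul (by positivity), ← ENNReal.ofReal_rpow_of_nonneg hwu0 ht0,
    ← ENNReal.ofReal_rpow_of_nonneg hu0 (sub_nonneg.2 ht1),
    ofReal_integral_eq_lintegral_ofReal hwu_int (.of_forall fun x => mul_nonneg (hw x) (hu x)),
    ofReal_integral_eq_lintegral_ofReal hu_int (.of_forall hu)]
  simp only [hsplit]
  exact ENNReal.lintegral_mul_norm_pow_le hwu_int.aemeasurable.ennreal_ofReal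
    hu_int.aemeasurable.ennreal_ofReal ht0 (sub_nonneg.2 ht1) (by ring)

lemma integrable_rpow_mul_of_le_one {w u : α → ℝ} (hw : ∀ x, 1 ≤ w x) (hwm : AEMeasurable w μ)
    (hu : ∀ x, 0 ≤ u x) (hum : AEMeasurable u μ) (hwu_int : Integrable (fun x => w x * u x) μ)
    {t : ℝ} (ht : t ≤ 1) : Integrable (fun x => w x ^ t * u x) μ :=
  hwu_int.mono' ((hwm.pow_const t).mul hum).aestronglyMeasurable <| .of_forall fun x => by
    have hwx := hw x
    rw [Real.norm_of_nonneg (by have := hu x; positivity)]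
    exact mul_le_mul_of_nonneg_right
      (by simpa using Real.rpow_le_rpow_of_exponent_le hwx ht) (hu x)

lemma sqrt_integral_rpow_mul_le {w u : α → ℝ} (hw : ∀ x, 1 ≤ w x) (hwm : AEMeasurable w μ)
    (hu : ∀ x, 0 ≤ u x) (hu_int : Integrable u μ) (hwu_int : Integrable (fun x => w x * u x) μ)
    {K : ℝ} (hK0 : 0 ≤ K) (hK : ∫ x, w x * u x ∂μ ≤ K ^ 2) {θ : ℝ} (hθ : θ < 1) :
    √(∫ x, w x ^ (2 * θ - 1) * u x ∂μ)
      ≤ max 1 (K ^ (2 * θ - 1)) * (∫ x, u x ∂μ) ^ min (1 / 2 : ℝ) (1 - θ) := by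
  have hu0 : 0 ≤ ∫ x, u x ∂μ := integral_nonneg hu
  rcases le_or_gt θ (1 / 2) with hθ' | hθ'
  · have hle : ∫ x, w x ^ (2 * θ - 1) * u x ∂μ ≤ ∫ x, u x ∂μ :=
      integral_mono_of_nonneg (.of_forall fun x => by have := hu x; have := hw x; positivity)
        hu_int <| .of_forall fun x => mul_le_of_le_one_left (hu x)
          (Real.rpow_le_one_of_one_le_of_nonpos (hw x) (by linarith))
    rw [min_eq_left (by linarith), ← Real.sqrt_eq_rpow]
    exact (Real.sqrt_le_sqrt hle).trans
      (le_mul_of_one_le_left (Real.sqrt_nonneg _) (le_max_left _ _))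
  · have ht0 : 0 ≤ 2 * θ - 1 := by linarith
    have hwu0 : 0 ≤ ∫ x, w x * u x ∂μ :=
      integral_nonneg fun x => mul_nonneg (zero_le_one.trans (hw x)) (hu x)
    have hinterp := integral_rpow_mul_le_rpow_mul_rpow (fun x => zero_le_one.trans (hw x)) hu
      hu_int hwu_int (integrable_rpow_mul_of_le_one hw hwm hu hu_int.aemeasurable hwu_int
        (by linarith)) ht0 (by linarith)
    rw [min_eq_right (by linarith), Real.sqrt_le_left (by positivity)]
    calc ∫ x, w x ^ (2 * θ - 1) * u x ∂μ
        ≤ (K ^ 2) ^ (2 * θ - 1) * (∫ x, u x ∂μ) ^ (1 - (2 * θ - 1)) :=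
          hinterp.trans (by gcongr)
      _ = (K ^ (2 * θ - 1) * (∫ x, u x ∂μ) ^ (1 - θ)) ^ 2 := by
          rw [mul_pow, Real.rpow_pow_comm hK0, ← Real.rpow_mul_natCast hu0]
          ring_nf
      _ ≤ _ := by gcongr; exact le_max_right _ _

end

section

variable {𝕜 E : Type*} [NormedField 𝕜] [NormedAddCommGroup E] [NormedSpace 𝕜 E]
  {c : 𝕜}

lemma norm_sub_smul_le (hc : ‖c‖ ≤ 1) (x y : E) : ‖x - c • y‖ ≤ ‖x‖ + ‖y‖ :=
  (norm_sub_le _ _).trans <| by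
    rw [norm_smul]; gcongr; exact mul_le_of_le_one_left (norm_nonneg y) hc

lemma norm_sq_sub_norm_sq_mul_le (hc : ‖c‖ ≤ 1) (x y : E) :
    ‖x‖ ^ 2 - ‖c‖ ^ 2 * ‖y‖ ^ 2 ≤ ‖x - c • y‖ * (‖x‖ + ‖y‖) := by
  have hcy : ‖c‖ * ‖y‖ ≤ ‖y‖ := mul_le_of_le_one_left (norm_nonneg y) hc
  have hdiff : ‖x‖ - ‖c‖ * ‖y‖ ≤ ‖x - c • y‖ := by
    simpa only [norm_smul] using norm_sub_norm_le x (c • y)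
  nlinarith [norm_nonneg x, norm_nonneg (x - c • y), mul_nonneg (norm_nonneg c) (norm_nonneg y)]

variable {α : Type*} [MeasurableSpace α] {μ : Measure α}

lemma integral_mul_norm_sq_sub_le {v : α → ℝ} (hv : ∀ x, 0 ≤ v x) (hc : ‖c‖ ≤ 1) {F G : α → E}
    (hF : Integrable (fun x => v x * ‖F x‖ ^ 2) μ) (hG : Integrable (fun x => v x * ‖G x‖ ^ 2) μ)
    (hQ : Integrable (fun x => v x * (‖F x - c • G x‖ * (‖F x‖ + ‖G x‖))) μ) :
    ∫ x, v x * ‖F x‖ ^ 2 ∂μ - ∫ x, v x * ‖G x‖ ^ 2 ∂μ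
      ≤ ∫ x, v x * (‖F x - c • G x‖ * (‖F x‖ + ‖G x‖)) ∂μ := by
  have hG0 : 0 ≤ ∫ x, v x * ‖G x‖ ^ 2 ∂μ := integral_nonneg fun x => by have := hv x; positivity
  have hc2 : ‖c‖ ^ 2 ≤ 1 := pow_le_one₀ (norm_nonneg c) hc
  calc ∫ x, v x * ‖F x‖ ^ 2 ∂μ - ∫ x, v x * ‖G x‖ ^ 2 ∂μ
      ≤ ∫ x, v x * ‖F x‖ ^ 2 ∂μ - ‖c‖ ^ 2 * ∫ x, v x * ‖G x‖ ^ 2 ∂μ := by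
        gcongr; exact mul_le_of_le_one_left hG0 hc2
    _ = ∫ x, v x * (‖F x‖ ^ 2 - ‖c‖ ^ 2 * ‖G x‖ ^ 2) ∂μ := by
        rw [← integral_const_mul, ← integral_sub hF (hG.const_mul (‖c‖ ^ 2))]
        congr 1; funext x; ring
    _ ≤ _ := integral_mono ((hF.sub (hG.const_mul (‖c‖ ^ 2))).congr (.of_forall fun x => by
          simp only [Pi.sub_apply]; ring)) hQ
        fun x => mul_le_mul_of_nonneg_left (norm_sq_sub_norm_sq_mul_le hc _ _) (hv x)

lemma memLp_two_sqrt_mul_norm {w : α → ℝ} (hw : ∀ x, 0 ≤ w x) (hwm : AEMeasurable w μ)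
    {F : α → E} (hF : AEStronglyMeasurable F μ) (hFw : Integrable (fun x => w x * ‖F x‖ ^ 2) μ) :
    MemLp (fun x => √(w x) * ‖F x‖) 2 μ :=
  (memLp_two_iff_integrable_sq (f := fun x => √(w x) * ‖F x‖)
    (hwm.sqrt.aestronglyMeasurable.mul hF.norm)).2 <|
    hFw.congr (.of_forall fun x => by simp only [mul_pow, Real.sq_sqrt (hw x)])

lemma integral_sqrt_mul_norm_add_sq_le {w : α → ℝ} (hw : ∀ x, 0 ≤ w x) (hwm : AEMeasurable w μ)
    {F G : α → E} (hF : AEStronglyMeasurable F μ) (hG : AEStronglyMeasurable G μ)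
    (hFw : Integrable (fun x => w x * ‖F x‖ ^ 2) μ)
    (hGw : Integrable (fun x => w x * ‖G x‖ ^ 2) μ) :
    ∫ x, (√(w x) * ‖F x‖ + √(w x) * ‖G x‖) ^ 2 ∂μ
      ≤ (√(∫ x, w x * ‖F x‖ ^ 2 ∂μ) + √(∫ x, w x * ‖G x‖ ^ 2 ∂μ)) ^ 2 := by
  have h := sqrt_integral_add_sq_le (memLp_two_sqrt_mul_norm hw hwm hF hFw)
    (memLp_two_sqrt_mul_norm hw hwm hG hGw)
  simp only [mul_pow, Real.sq_sqrt (hw _)] at h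
  exact (Real.sqrt_le_left (by positivity)).1 h

lemma sqrt_mul_norm_sub_smul_le (hc : ‖c‖ ≤ 1) (r : ℝ) (x y : E) :
    √r * ‖x - c • y‖ ≤ √r * ‖x‖ + √r * ‖y‖ := by
  rw [← mul_add]; exact mul_le_mul_of_nonneg_left (norm_sub_smul_le hc x y) (Real.sqrt_nonneg r)

lemma memLp_two_sqrt_mul_norm_sub_smul {w : α → ℝ} (hw : ∀ x, 0 ≤ w x) (hwm : AEMeasurable w μ)
    {F G : α → E} (hF : AEStronglyMeasurable F μ) (hG : AEStronglyMeasurable G μ)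
    (hFw : Integrable (fun x => w x * ‖F x‖ ^ 2) μ) (hGw : Integrable (fun x => w x * ‖G x‖ ^ 2) μ)
    (hc : ‖c‖ ≤ 1) : MemLp (fun x => √(w x) * ‖F x - c • G x‖) 2 μ :=
  ((memLp_two_sqrt_mul_norm hw hwm hF hFw).add (memLp_two_sqrt_mul_norm hw hwm hG hGw)).of_le
    (hwm.sqrt.aestronglyMeasurable.mul (hF.sub (hG.const_smul c)).norm) <| .of_forall fun x => by
      simp only [Real.norm_eq_abs, Pi.add_apply]
      exact abs_le_abs_of_nonneg (by positivity) (sqrt_mul_norm_sub_smul_le hc (w x) _ _)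

lemma integral_mul_norm_sub_smul_sq_le {w : α → ℝ} (hw : ∀ x, 0 ≤ w x) (hwm : AEMeasurable w μ)
    {F G : α → E} (hF : AEStronglyMeasurable F μ) (hG : AEStronglyMeasurable G μ)
    (hFw : Integrable (fun x => w x * ‖F x‖ ^ 2) μ) (hGw : Integrable (fun x => w x * ‖G x‖ ^ 2) μ)
    (hc : ‖c‖ ≤ 1) :
    ∫ x, w x * ‖F x - c • G x‖ ^ 2 ∂μ
      ≤ (√(∫ x, w x * ‖F x‖ ^ 2 ∂μ) + √(∫ x, w x * ‖G x‖ ^ 2 ∂μ)) ^ 2 := by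
  have hf := (memLp_two_sqrt_mul_norm hw hwm hF hFw).add (memLp_two_sqrt_mul_norm hw hwm hG hGw)
  refine le_trans (integral_mono_of_nonneg (.of_forall fun x => ?_) hf.integrable_sq
    (.of_forall fun x => ?_)) (integral_sqrt_mul_norm_add_sq_le hw hwm hF hG hFw hGw)
  · have := hw x; positivity
  · simpa only [Pi.add_apply, mul_pow, Real.sq_sqrt (hw x)] using
      pow_le_pow_left₀ (by positivity) (sqrt_mul_norm_sub_smul_le hc (w x) (F x) (G x)) 2

lemma integral_rpow_mul_norm_sq_sub_le_mul_sqrt {w : α → ℝ} (hw : ∀ x, 1 ≤ w x)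
    (hwm : AEMeasurable w μ) {F G : α → E} (hF : AEStronglyMeasurable F μ)
    (hG : AEStronglyMeasurable G μ) (hFw : Integrable (fun x => w x * ‖F x‖ ^ 2) μ)
    (hGw : Integrable (fun x => w x * ‖G x‖ ^ 2) μ) (hc : ‖c‖ ≤ 1) {θ : ℝ} (hθ : θ < 1) :
    ∫ x, w x ^ θ * ‖F x‖ ^ 2 ∂μ - ∫ x, w x ^ θ * ‖G x‖ ^ 2 ∂μ
      ≤ (√(∫ x, w x * ‖F x‖ ^ 2 ∂μ) + √(∫ x, w x * ‖G x‖ ^ 2 ∂μ))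
        * √(∫ x, w x ^ (2 * θ - 1) * ‖F x - c • G x‖ ^ 2 ∂μ) := by
  have hw0 x : 0 ≤ w x := zero_le_one.trans (hw x)
  set Q : α → E := fun x => F x - c • G x
  set f : α → ℝ := fun x => √(w x) * ‖F x‖ + √(w x) * ‖G x‖
  have hf : MemLp f 2 μ :=
    (memLp_two_sqrt_mul_norm hw0 hwm hF hFw).add (memLp_two_sqrt_mul_norm hw0 hwm hG hGw)
  set g : α → ℝ := fun x => w x ^ (θ - 1 / 2) * ‖Q x‖
  have hg : MemLp g 2 μ :=
    (memLp_two_sqrt_mul_norm_sub_smul hw0 hwm hF hG hFw hGw hc).of_le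
      ((hwm.pow_const _).aestronglyMeasurable.mul (hF.sub (hG.const_smul c)).norm)
      (.of_forall fun x => by
        rw [Real.norm_of_nonneg (by have := hw0 x; positivity),
          Real.norm_of_nonneg (by positivity), Real.sqrt_eq_rpow]
        exact mul_le_mul_of_nonneg_right
          (Real.rpow_le_rpow_of_exponent_le (hw x) (by linarith)) (norm_nonneg _))
  have hfg x : w x ^ θ * (‖Q x‖ * (‖F x‖ + ‖G x‖)) = f x * g x := by
    have : w x ^ θ = √(w x) * w x ^ (θ - 1 / 2) := by
      rw [Real.sqrt_eq_rpow, ← Real.rpow_add (by linarith [hw x])]; ring_nf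
    simp only [f, g, this]; ring
  have hg2 x : g x ^ 2 = w x ^ (2 * θ - 1) * ‖Q x‖ ^ 2 := by
    rw [mul_pow, ← Real.rpow_mul_natCast (hw0 x)]; ring_nf
  have hθ_int {u : α → ℝ} (hu : ∀ x, 0 ≤ u x) (hum : AEMeasurable u μ)
      (hwu : Integrable (fun x => w x * u x) μ) : Integrable (fun x => w x ^ θ * u x) μ :=
    integrable_rpow_mul_of_le_one hw hwm hu hum hwu hθ.le
  calc ∫ x, w x ^ θ * ‖F x‖ ^ 2 ∂μ - ∫ x, w x ^ θ * ‖G x‖ ^ 2 ∂μ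
      ≤ ∫ x, w x ^ θ * (‖Q x‖ * (‖F x‖ + ‖G x‖)) ∂μ :=
        integral_mul_norm_sq_sub_le (fun x => Real.rpow_nonneg (hw0 x) θ) hc
          (hθ_int (fun _ => sq_nonneg _) (hF.norm.aemeasurable.pow_const 2) hFw)
          (hθ_int (fun _ => sq_nonneg _) (hG.norm.aemeasurable.pow_const 2) hGw)
          ((hf.integrable_mul hg).congr (.of_forall fun x => (hfg x).symm))
    _ = ∫ x, f x * g x ∂μ := integral_congr_ae (.of_forall hfg)
    _ ≤ √(∫ x, f x ^ 2 ∂μ) * √(∫ x, g x ^ 2 ∂μ) := integral_mul_le_sqrt_mul_sqrt hf hg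
    _ ≤ _ := by
        simp only [hg2]
        gcongr
        exact (Real.sqrt_le_left (by positivity)).2
          (integral_sqrt_mul_norm_add_sq_le hw0 hwm hF hG hFw hGw)

theorem integral_rpow_mul_norm_sq_sub_le {w : α → ℝ} (hw : ∀ x, 1 ≤ w x) (hwm : AEMeasurable w μ)
    {F G : α → E} (hF : MemLp F 2 μ) (hG : MemLp G 2 μ)
    (hFw : Integrable (fun x => w x * ‖F x‖ ^ 2) μ) (hGw : Integrable (fun x => w x * ‖G x‖ ^ 2) μ)
    (hc : ‖c‖ ≤ 1) {θ : ℝ} (hθ : θ < 1) :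
    ∫ x, w x ^ θ * ‖F x‖ ^ 2 ∂μ - ∫ x, w x ^ θ * ‖G x‖ ^ 2 ∂μ
      ≤ (√(∫ x, w x * ‖F x‖ ^ 2 ∂μ) + √(∫ x, w x * ‖G x‖ ^ 2 ∂μ))
        * max 1 ((√(∫ x, w x * ‖F x‖ ^ 2 ∂μ) + √(∫ x, w x * ‖G x‖ ^ 2 ∂μ)) ^ (2 * θ - 1))
        * (∫ x, ‖F x - c • G x‖ ^ 2 ∂μ) ^ min (1 / 2 : ℝ) (1 - θ) := by
  have hw0 x : 0 ≤ w x := zero_le_one.trans (hw x)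
  have hwQ := memLp_two_sqrt_mul_norm_sub_smul hw0 hwm hF.1 hG.1 hFw hGw hc
  refine (integral_rpow_mul_norm_sq_sub_le_mul_sqrt hw hwm hF.1 hG.1 hFw hGw hc hθ).trans ?_
  rw [mul_assoc]
  gcongr
  exact sqrt_integral_rpow_mul_le (u := fun x => ‖F x - c • G x‖ ^ 2) hw hwm (fun _ => sq_nonneg _)
    (hF.sub (hG.const_smul c)).norm.integrable_sq
    (hwQ.integrable_sq.congr (.of_forall fun x => by simp only [mul_pow, Real.sq_sqrt (hw0 x)]))
    (by positivity) (integral_mul_norm_sub_smul_sq_le hw0 hwm hF.1 hG.1 hFw hGw hc) hθ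

end

theorem stmt_5_general (d : ℕ) (s : ℝ) (hs : 0 < s) (θ : ℝ) (hθ1 : θ < 1)
    (F G : EuclideanSpace ℝ (Fin d) → ℂ)
    (hF2 : MemLp F 2 (volume : Measure (EuclideanSpace ℝ (Fin d))))
    (hG2 : MemLp G 2 (volume : Measure (EuclideanSpace ℝ (Fin d))))
    (hFnorm : eLpNorm F 2 volume = 1) (hGnorm : eLpNorm G 2 volume = 1)
    (hFs : Integrable (fun ξ => (1 + ‖ξ‖ ^ 2) ^ s * ‖F ξ‖ ^ 2) volume)
    (hGs : Integrable (fun ξ => (1 + ‖ξ‖ ^ 2) ^ s * ‖G ξ‖ ^ 2) volume)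
    (a M : ℝ)
    (ha : a = ∫ ξ, ‖F ξ - (∫ η, (starRingEnd ℂ) (G η) * F η) * G ξ‖ ^ 2)
    (hM : M = Real.sqrt (∫ ξ, (1 + ‖ξ‖ ^ 2) ^ s * ‖F ξ‖ ^ 2)
      + Real.sqrt (∫ ξ, (1 + ‖ξ‖ ^ 2) ^ s * ‖G ξ‖ ^ 2)) :
    (∫ ξ, (1 + ‖ξ‖ ^ 2) ^ (θ * s) * ‖F ξ‖ ^ 2) - (∫ ξ, (1 + ‖ξ‖ ^ 2) ^ (θ * s) * ‖G ξ‖ ^ 2)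
      ≤ M * max 1 (M ^ (2 * θ - 1)) * a ^ min (1/2 : ℝ) (1 - θ) := by
  have hbase (ξ : EuclideanSpace ℝ (Fin d)) : 1 ≤ 1 + ‖ξ‖ ^ 2 :=
    le_add_of_nonneg_right (sq_nonneg _)
  have hpow (ξ : EuclideanSpace ℝ (Fin d)) : (1 + ‖ξ‖ ^ 2) ^ (θ * s) = ((1 + ‖ξ‖ ^ 2) ^ s) ^ θ := by
    rw [mul_comm, Real.rpow_mul (zero_le_one.trans (hbase ξ))]
  have hc : ‖∫ η, (starRingEnd ℂ) (G η) * F η‖ ≤ 1 := by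
    have h := norm_integral_conj_mul_le hG2 hF2
    rwa [← hG2.toReal_eLpNorm_two, ← hF2.toReal_eLpNorm_two, hFnorm, hGnorm,
      ENNReal.toReal_one, one_mul] at h
  subst ha hM
  simp only [hpow]
  simpa only [smul_eq_mul] using integral_rpow_mul_norm_sq_sub_le
    (fun ξ => Real.one_le_rpow (hbase ξ) hs.le) (by fun_prop) hF2 hG2 hFs hGs hc hθ1

/-- Let `φ, Ψ ∈ H^s(ℝ^d)` with `‖φ‖_{L²} = ‖Ψ‖_{L²} = 1`, `p = |φ⟩⟨φ|`,
`q = 1 - p`, `S = (1-Δ)^s`, and `a = ‖qΨ‖²`.  Then for `θ ∈ [0,1)`: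
`⟨Ψ, S^θ Ψ⟩ - ⟨φ, S^θ φ⟩ ≤ (‖S^{1/2}Ψ‖ + ‖S^{1/2}φ‖) ·
  max(1, (‖S^{1/2}Ψ‖+‖S^{1/2}φ‖)^{2θ-1}) · a^{min(1/2, 1-θ)}`.

Working on the Fourier side (Plancherel), `Ψ` and `φ` are represented by their Fourier
transforms `F = 𝓕Ψ`, `G = 𝓕φ`, unit vectors of `L²(ℝ^d)`; `S^r` acts as multiplication
by `w(ξ)^r` with `w(ξ) = (1+|ξ|²)^s`, so `⟨Ψ, S^θΨ⟩ = ∫ w^θ |F|²`,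
`‖S^{1/2}Ψ‖² = ∫ w |F|²`, and `a = ‖qΨ‖² = ∫ |F - ⟨G,F⟩G|²`.  The hypothesis
`φ, Ψ ∈ H^s` is the integrability of `w|F|²` and `w|G|²`. -/
theorem stmt_5 (d : ℕ) (s : ℝ) (hs : 0 < s) (θ : ℝ) (hθ0 : 0 ≤ θ) (hθ1 : θ < 1)
    (F G : EuclideanSpace ℝ (Fin d) → ℂ)
    (hF2 : MemLp F 2 (volume : Measure (EuclideanSpace ℝ (Fin d))))
    (hG2 : MemLp G 2 (volume : Measure (EuclideanSpace ℝ (Fin d))))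
    (hFnorm : eLpNorm F 2 volume = 1) (hGnorm : eLpNorm G 2 volume = 1)
    (hFs : Integrable (fun ξ => (1 + ‖ξ‖ ^ 2) ^ s * ‖F ξ‖ ^ 2) volume)
    (hGs : Integrable (fun ξ => (1 + ‖ξ‖ ^ 2) ^ s * ‖G ξ‖ ^ 2) volume)
    (a M : ℝ)
    (ha : a = ∫ ξ, ‖F ξ - (∫ η, (starRingEnd ℂ) (G η) * F η) * G ξ‖ ^ 2)
    (hM : M = Real.sqrt (∫ ξ, (1 + ‖ξ‖ ^ 2) ^ s * ‖F ξ‖ ^ 2)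
      + Real.sqrt (∫ ξ, (1 + ‖ξ‖ ^ 2) ^ s * ‖G ξ‖ ^ 2)) :
    (∫ ξ, (1 + ‖ξ‖ ^ 2) ^ (θ * s) * ‖F ξ‖ ^ 2) - (∫ ξ, (1 + ‖ξ‖ ^ 2) ^ (θ * s) * ‖G ξ‖ ^ 2)
      ≤ M * max 1 (M ^ (2 * θ - 1)) * a ^ min (1/2 : ℝ) (1 - θ) :=
  stmt_5_general d s hs θ hθ1 F G hF2 hG2 hFnorm hGnorm hFs hGs a M ha hM
end
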